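/- Let K be the field of fractions of ℚ[x₀,x₁,x₂,x₃,x₄,x₅], set A = (x₂x₄+x₃x₅)/(x₀x₁), B = (x₁x₄+x₀x₅)/(x₂x₃), C = (x₀x₂+x₁x₃)/(x₄x₅), let τ'₁, τ'₂, τ'₃ be the maps on K⁶ defined by: τ'₁ replaces (v₀,v₁) by ((v₂v₄+v₃v₅)/v₁, (v₂v₄+v₃v₅)/v₀); τ'₂ replaces (v₂,v₃) by ((v₁v₄+v₀v₅)/v₃, (v₁v₄+v₀v₅)/v₂); τ'₃ replaces (v₄,v₅) by ((v₀v₂+v₁v₃)/v₅, (v₀v₂+v₁v₃)/v₄); each fixes the remaining entries. Let Φ = τ'₃∘τ'₂∘τ'₁ and X = (x₀,…,x₅). Then for every natural number m, Φ^{2m}(X) = (x₀A^{3m²}B^{3m²−m}C^{3m²−2m}, x₁A^{3m²}B^{3m²−m}C^{3m²−2m}, x₂A^{3m²+m}B^{3m²}C^{3m²−m}, x₃A^{3m²+m}B^{3m²}C^{3m²−m}, x₄A^{3m²+2m}B^{3m²+m}C^{3m²}, x₅A^{3m²+2m}B^{3m²+m}C^{3m²}). -/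

import Mathlib

noncomputable section

/-- The polynomial ring ℚ[x₀,…,x₅]. -/
abbrev P : Type := MvPolynomial (Fin 6) ℚ

/-- K = Frac(ℚ[x₀,…,x₅]). -/
abbrev K : Type := FractionRing P

/-- The images of the variables x₀,…,x₅ in K. -/
def x (i : Fin 6) : K := algebraMap P K (MvPolynomial.X i)

/-- τ'₁ : replaces (v₀, v₁) by ((v₂v₄+v₃v₅)/v₁, (v₂v₄+v₃v₅)/v₀). -/
def tau1 (v : Fin 6 → K) : Fin 6 → K := fun k =>
  if k = 0 then (v 2 * v 4 + v 3 * v 5) / v 1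
  else if k = 1 then (v 2 * v 4 + v 3 * v 5) / v 0
  else v k

/-- τ'₂ : replaces (v₂, v₃) by ((v₁v₄+v₀v₅)/v₃, (v₁v₄+v₀v₅)/v₂). -/
def tau2 (v : Fin 6 → K) : Fin 6 → K := fun k =>
  if k = 2 then (v 1 * v 4 + v 0 * v 5) / v 3
  else if k = 3 then (v 1 * v 4 + v 0 * v 5) / v 2
  else v k

/-- τ'₃ : replaces (v₄, v₅) by ((v₀v₂+v₁v₃)/v₅, (v₀v₂+v₁v₃)/v₄). -/
def tau3 (v : Fin 6 → K) : Fin 6 → K := fun k =>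
  if k = 4 then (v 0 * v 2 + v 1 * v 3) / v 5
  else if k = 5 then (v 0 * v 2 + v 1 * v 3) / v 4
  else v k

/-- τ' indexed by Fin 3: `tau i` is τ'_{i+1}. -/
def tau : Fin 3 → (Fin 6 → K) → (Fin 6 → K)
  | 0 => tau1
  | 1 => tau2
  | 2 => tau3

/-- The initial labeled seed X = (x₀,…,x₅). -/
def X0 : Fin 6 → K := x

/-- Apply the maps τ'₍a₁₎, …, τ'₍aₙ₎ along the word `w` in left-to-right order. -/
def applyWord (w : List (Fin 3)) (v : Fin 6 → K) : Fin 6 → K :=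
  w.foldl (fun u a => tau a u) v

/-- A = (x₂x₄+x₃x₅)/(x₀x₁). -/
def A : K := (x 2 * x 4 + x 3 * x 5) / (x 0 * x 1)

/-- B = (x₁x₄+x₀x₅)/(x₂x₃). -/
def B : K := (x 1 * x 4 + x 0 * x 5) / (x 2 * x 3)

/-- C = (x₀x₂+x₁x₃)/(x₄x₅). -/
def C : K := (x 0 * x 2 + x 1 * x 3) / (x 4 * x 5)

/-- Φ = τ'₃ ∘ τ'₂ ∘ τ'₁, one application of the mutation sequence β = 123. -/
def Phi : (Fin 6 → K) → (Fin 6 → K) := fun v => tau3 (tau2 (tau1 v))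

/-!
Every seed met along the orbit of `X0` has the form `(x₀M₀, x₁M₀, x₂M₁, x₃M₁, x₄M₂, x₅M₂)` with
Laurent monomials `Mₖ = A^{Eₖ₀} B^{Eₖ₁} C^{Eₖ₂}`. Since the numerator of `τ'ₖ` is `x_{2k} x_{2k+1}`
times `A`, `B` or `C`, the map `τ'ₖ` preserves this shape and acts on the exponent rows linearly:
`Eₖ ↦ E_{k+1} + E_{k+2} - Eₖ + eₖ`. The theorem is then the statement that
`Eₖⱼ = 3m² + (k - j)m` is advanced from `m` to `m + 1` by two rounds of `Φ`.
-/

namespace DP3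

abbrev Exponents : Type := Fin 3 → Fin 3 → ℤ

lemma x_ne_zero (i : Fin 6) : x i ≠ 0 := by
  simp [x, MvPolynomial.X_ne_zero]

lemma x_mul_add_x_mul_ne_zero (i j k l : Fin 6) : x i * x j + x k * x l ≠ 0 := by
  have hcast : x i * x j + x k * x l = algebraMap P K
      (MvPolynomial.X i * MvPolynomial.X j + MvPolynomial.X k * MvPolynomial.X l) := by
    simp [x]
  rw [hcast, ne_eq, IsFractionRing.to_map_eq_zero_iff]
  intro h
  simpa using congrArg (MvPolynomial.eval fun _ => (1 : ℚ)) h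

lemma A_ne_zero : A ≠ 0 :=
  div_ne_zero (x_mul_add_x_mul_ne_zero 2 4 3 5) (mul_ne_zero (x_ne_zero 0) (x_ne_zero 1))

lemma B_ne_zero : B ≠ 0 :=
  div_ne_zero (x_mul_add_x_mul_ne_zero 1 4 0 5) (mul_ne_zero (x_ne_zero 2) (x_ne_zero 3))

lemma C_ne_zero : C ≠ 0 :=
  div_ne_zero (x_mul_add_x_mul_ne_zero 0 2 1 3) (mul_ne_zero (x_ne_zero 4) (x_ne_zero 5))

def monomial (e : Fin 3 → ℤ) : K := A ^ e 0 * B ^ e 1 * C ^ e 2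

lemma monomial_ne_zero (e : Fin 3 → ℤ) : monomial e ≠ 0 :=
  mul_ne_zero (mul_ne_zero (zpow_ne_zero _ A_ne_zero) (zpow_ne_zero _ B_ne_zero))
    (zpow_ne_zero _ C_ne_zero)

lemma monomial_add (e f : Fin 3 → ℤ) : monomial (e + f) = monomial e * monomial f := by
  simp only [monomial, Pi.add_apply, zpow_add₀ A_ne_zero, zpow_add₀ B_ne_zero,
    zpow_add₀ C_ne_zero]
  ring

lemma monomial_sub (e f : Fin 3 → ℤ) : monomial (e - f) = monomial e / monomial f := by
  rw [eq_div_iff (monomial_ne_zero f), ← monomial_add, sub_add_cancel]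

lemma exchange_A : monomial (Pi.single 0 1) * (x 0 * x 1) = x 2 * x 4 + x 3 * x 5 := by
  simp [monomial]
  exact div_mul_cancel₀ _ (mul_ne_zero (x_ne_zero 0) (x_ne_zero 1))

lemma exchange_B : monomial (Pi.single 1 1) * (x 2 * x 3) = x 1 * x 4 + x 0 * x 5 := by
  simp [monomial]
  exact div_mul_cancel₀ _ (mul_ne_zero (x_ne_zero 2) (x_ne_zero 3))

lemma exchange_C : monomial (Pi.single 2 1) * (x 4 * x 5) = x 0 * x 2 + x 1 * x 3 := by
  simp [monomial]
  exact div_mul_cancel₀ _ (mul_ne_zero (x_ne_zero 4) (x_ne_zero 5))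

lemma exchange_div {F : Type*} [Field F] {p q r s d e D M N L : F} (hd : d ≠ 0) (hL : L ≠ 0)
    (h : D * (d * e) = p * q + r * s) :
    (p * M * (q * N) + r * M * (s * N)) / (d * L) = e * (D * M * N / L) := by
  field_simp
  linear_combination (-(M * N)) * h

lemma monomial_exchange {i j k l d e : Fin 6} {a : Fin 3}
    (h : monomial (Pi.single a 1) * (x d * x e) = x i * x j + x k * x l)
    (E₀ E₁ E₂ : Fin 3 → ℤ) :
    (x i * monomial E₁ * (x j * monomial E₂) + x k * monomial E₁ * (x l * monomial E₂)) /
        (x d * monomial E₀) =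
      x e * monomial (E₁ + E₂ - E₀ + Pi.single a 1) := by
  rw [exchange_div (x_ne_zero d) (monomial_ne_zero E₀) h, monomial_add, monomial_sub,
    monomial_add]
  ring

def seed (E : Exponents) : Fin 6 → K :=
  ![x 0 * monomial (E 0), x 1 * monomial (E 0), x 2 * monomial (E 1), x 3 * monomial (E 1),
    x 4 * monomial (E 2), x 5 * monomial (E 2)]

def mutateExponents (k : Fin 3) (E : Exponents) : Exponents :=
  Function.update E k (E (k + 1) + E (k + 2) - E k + Pi.single k 1)

lemma tau1_seed (E : Exponents) : tau1 (seed E) = seed (mutateExponents 0 E) := by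
  funext i
  fin_cases i <;> simp [tau1, seed, mutateExponents]
  exacts [monomial_exchange (by linear_combination exchange_A) _ _ _,
    monomial_exchange (by linear_combination exchange_A) _ _ _]

lemma tau2_seed (E : Exponents) : tau2 (seed E) = seed (mutateExponents 1 E) := by
  funext i
  -- the binomial of `τ'₂` meets pair `0` before pair `2`
  fin_cases i <;> simp [tau2, seed, mutateExponents, add_comm (E 2)]
  exacts [monomial_exchange (by linear_combination exchange_B) _ _ _,
    monomial_exchange (by linear_combination exchange_B) _ _ _]

lemma tau3_seed (E : Exponents) : tau3 (seed E) = seed (mutateExponents 2 E) := by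
  funext i
  fin_cases i <;> simp [tau3, seed, mutateExponents]
  exacts [monomial_exchange (by linear_combination exchange_C) _ _ _,
    monomial_exchange (by linear_combination exchange_C) _ _ _]

def phiExponents (E : Exponents) : Exponents :=
  mutateExponents 2 (mutateExponents 1 (mutateExponents 0 E))

lemma Phi_seed (E : Exponents) : Phi (seed E) = seed (phiExponents E) := by
  simp only [Phi, phiExponents, tau1_seed, tau2_seed, tau3_seed]

def evenExponents (m : ℤ) : Exponents := fun k j => 3 * m ^ 2 + ((k : ℤ) - j) * m

lemma phiExponents_phiExponents_evenExponents (m : ℤ) :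
    phiExponents (phiExponents (evenExponents m)) = evenExponents (m + 1) := by
  funext k j
  fin_cases k <;> fin_cases j <;> simp [phiExponents, mutateExponents, evenExponents] <;> ring

lemma iterate_Phi_X0 (m : ℕ) : Phi^[2 * m] X0 = seed (evenExponents m) := by
  induction m with
  | zero =>
    funext i
    fin_cases i <;> simp [X0, seed, evenExponents, monomial]
  | succ m ih =>
    rw [show 2 * (m + 1) = 2 + 2 * m by ring, Function.iterate_add_apply, ih,
      Function.iterate_succ_apply', Function.iterate_one, Phi_seed, Phi_seed,
      phiExponents_phiExponents_evenExponents]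
    push_cast
    rfl

end DP3

theorem beta_even (m : ℕ) :
    Phi^[2 * m] X0 =
      ![x 0 * A ^ (3 * (m : ℤ) ^ 2) * B ^ (3 * (m : ℤ) ^ 2 - m) * C ^ (3 * (m : ℤ) ^ 2 - 2 * m),
        x 1 * A ^ (3 * (m : ℤ) ^ 2) * B ^ (3 * (m : ℤ) ^ 2 - m) * C ^ (3 * (m : ℤ) ^ 2 - 2 * m),
        x 2 * A ^ (3 * (m : ℤ) ^ 2 + m) * B ^ (3 * (m : ℤ) ^ 2) * C ^ (3 * (m : ℤ) ^ 2 - m),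
        x 3 * A ^ (3 * (m : ℤ) ^ 2 + m) * B ^ (3 * (m : ℤ) ^ 2) * C ^ (3 * (m : ℤ) ^ 2 - m),
        x 4 * A ^ (3 * (m : ℤ) ^ 2 + 2 * m) * B ^ (3 * (m : ℤ) ^ 2 + m) * C ^ (3 * (m : ℤ) ^ 2),
        x 5 * A ^ (3 * (m : ℤ) ^ 2 + 2 * m) * B ^ (3 * (m : ℤ) ^ 2 + m) * C ^ (3 * (m : ℤ) ^ 2)] := by
  rw [DP3.iterate_Phi_X0]
  funext i
  fin_cases i <;> simp [DP3.seed, DP3.evenExponents, DP3.monomial, mul_assoc, sub_eq_add_neg]
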